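/- arXiv:1911.06545 — 4 statements merged into one kernel-verified Lean document; each statement's English description precedes it below -/
import Mathlib

section
/- Define ξ_n = Σ_{k=1}^n (Y_{k−1} − c v_k) and T* = min{1 ≤ k ≤ N+1 : Y_k ≥ l_k(c)} (with Y_{N+1} := Y_N and l_{N+1}(c) = 0, so T* ≤ N+1). Then for every 1 ≤ n ≤ N, on the event {T* > n} one has ME(ξ_{T*} − ξ_n | 𝔉_n) = Y_n − l_n(c) < 0 μ-a.e. -/
/-!
Backward induction on `n` from `N`. On `{n < T*}` the gain splits as
`ξ_{T*} − ξ_n = (Y_n − c v_{n+1}) + 1_{n+1 < T*} (ξ_{T*} − ξ_{n+1})`. Conditioning the second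
term first on `𝔉_{n+1}` turns it, by the induction hypothesis, into `1_{n+1 < T*} (Y_{n+1} − l_{n+1})`,
which equals `−(l_{n+1} − Y_{n+1})⁺` on `{n < T*}` because `T*` stops at `n + 1` exactly when
`l_{n+1} ≤ Y_{n+1}`. Since `{n < T*} ∈ 𝔉_n`, the recursion for `l_n` identifies the conditional
expectation of this term given `𝔉_n` with `c v_{n+1} − l_n`, and the sum becomes `Y_n − l_n`.
That `Y_n < l_n` on `{n < T*}` is the minimality of `T*`.
-/

open MeasureTheory Finset

section

variable {Ω : Type*} {m0 : MeasurableSpace Ω}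

theorem indicator_lt_sub_eq_add (f : ℕ → Ω → ℝ) (T : Ω → ℕ) (k : ℕ) :
    {ω | k < T ω}.indicator (fun ω => f (T ω) ω - f k ω) =
      {ω | k < T ω}.indicator (fun ω => f (k + 1) ω - f k ω) +
        {ω | k + 1 < T ω}.indicator (fun ω => f (T ω) ω - f (k + 1) ω) := by
  funext ω
  simp only [Pi.add_apply, Set.indicator, Set.mem_ofPred_eq]
  split_ifs with h₁ h₂
  · ring
  · rw [show T ω = k + 1 by omega]
    ring
  · omega
  · simp

theorem indicator_succ_lt_sub_eq_neg (x y : Ω → ℝ) (T : Ω → ℕ) (k : ℕ)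
    (hcont : ∀ ω, k + 1 < T ω → y ω ≤ x ω) (hstop : ∀ ω, T ω = k + 1 → x ω ≤ y ω) :
    {ω | k + 1 < T ω}.indicator (fun ω => y ω - x ω) =
      -{ω | k < T ω}.indicator (fun ω => max (x ω - y ω) 0) := by
  funext ω
  simp only [Pi.neg_apply, Set.indicator, Set.mem_ofPred_eq]
  split_ifs with h₁ h₂
  · rw [max_eq_left (sub_nonneg.2 (hcont ω h₁))]; ring
  · omega
  · rw [max_eq_right (sub_nonpos.2 (hstop ω (by omega)))]; ring
  · simp

-- `a k` stands for the cost `c v_{k+1}`, which is `𝔉_k`-measurable.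
structure IsControlLimits (μ : Measure Ω) (ℱ : Filtration ℕ m0) (N : ℕ) (a Y l : ℕ → Ω → ℝ) :
    Prop where
  last : l N = a N
  succ : ∀ k < N, l k = a k + μ[fun ω => max (l (k + 1) ω - Y (k + 1) ω) 0 | ℱ k]

namespace IsControlLimits

variable {μ : Measure Ω} {ℱ : Filtration ℕ m0} {N : ℕ} {a Y l : ℕ → Ω → ℝ}

theorem stronglyMeasurable (hl : IsControlLimits μ ℱ N a Y l)
    (ha : ∀ k, StronglyMeasurable[ℱ k] (a k)) {k : ℕ} (hk : k ≤ N) :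
    StronglyMeasurable[ℱ k] (l k) := by
  rcases hk.lt_or_eq with hk | rfl
  · rw [hl.succ k hk]
    exact (ha k).add stronglyMeasurable_condExp
  · exact hl.last ▸ ha k

theorem integrable (hl : IsControlLimits μ ℱ N a Y l) (ha : ∀ k, Integrable (a k) μ) {k : ℕ}
    (hk : k ≤ N) : Integrable (l k) μ := by
  rcases hk.lt_or_eq with hk | rfl
  · rw [hl.succ k hk]
    exact (ha k).add integrable_condExp
  · exact hl.last ▸ ha k

end IsControlLimits

/-- The stopping index `T*`; it is the junk value `sInf ∅ = 0` if no `1 ≤ k ≤ N + 1` has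
`l k ω ≤ Y k ω`. -/
noncomputable def firstCrossing (N : ℕ) (l Y : ℕ → Ω → ℝ) (ω : Ω) : ℕ :=
  sInf {k | 1 ≤ k ∧ k ≤ N + 1 ∧ l k ω ≤ Y k ω}

section FirstCrossing

variable {N : ℕ} {l Y : ℕ → Ω → ℝ}

theorem firstCrossing_spec {ω : Ω} (hne : {k | 1 ≤ k ∧ k ≤ N + 1 ∧ l k ω ≤ Y k ω}.Nonempty) :
    1 ≤ firstCrossing N l Y ω ∧ firstCrossing N l Y ω ≤ N + 1 ∧
      l (firstCrossing N l Y ω) ω ≤ Y (firstCrossing N l Y ω) ω :=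
  Nat.sInf_mem hne

theorem lt_of_lt_firstCrossing {ω : Ω} {j : ℕ} (hj : 1 ≤ j) (hjN : j ≤ N + 1)
    (hjT : j < firstCrossing N l Y ω) : Y j ω < l j ω :=
  not_le.1 fun h => Nat.notMem_of_lt_sInf hjT ⟨hj, hjN, h⟩

theorem lt_firstCrossing_iff {ω : Ω} (hne : {k | 1 ≤ k ∧ k ≤ N + 1 ∧ l k ω ≤ Y k ω}.Nonempty)
    {k : ℕ} (hk : k ≤ N) : k < firstCrossing N l Y ω ↔ ∀ j ∈ Set.Icc 1 k, Y j ω < l j ω := by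
  refine ⟨fun hT j hj => lt_of_lt_firstCrossing hj.1 (by grind) (hj.2.trans_lt hT), fun h => ?_⟩
  obtain ⟨hT₁, -, hT⟩ := firstCrossing_spec hne
  by_contra! hTk
  exact (h _ ⟨hT₁, hTk⟩).not_ge hT

theorem measurableSet_lt_firstCrossing {ℱ : Filtration ℕ m0}
    (hne : ∀ ω, {k | 1 ≤ k ∧ k ≤ N + 1 ∧ l k ω ≤ Y k ω}.Nonempty)
    (hY : ∀ k, StronglyMeasurable[ℱ k] (Y k)) (hl : ∀ k ≤ N, StronglyMeasurable[ℱ k] (l k))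
    {k : ℕ} (hk : k ≤ N) : MeasurableSet[ℱ k] {ω | k < firstCrossing N l Y ω} := by
  have : {ω | k < firstCrossing N l Y ω} = ⋂ j ∈ Set.Icc 1 k, {ω | Y j ω < l j ω} := by
    ext ω
    simpa using lt_firstCrossing_iff (hne ω) hk
  rw [this]
  refine MeasurableSet.biInter (Set.to_countable _) fun j hj => ?_
  exact measurableSet_lt ((hY j).measurable.mono (ℱ.mono hj.2) le_rfl)
    ((hl j (hj.2.trans hk)).measurable.mono (ℱ.mono hj.2) le_rfl)

end FirstCrossing

section OptimalStopping

variable {μ : Measure Ω} {ℱ : Filtration ℕ m0} [SigmaFiniteFiltration μ ℱ] {N : ℕ}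
  {a Y l ξ : ℕ → Ω → ℝ}

theorem condExp_indicator_lt_firstCrossing
    (ha : ∀ k, StronglyMeasurable[ℱ k] (a k)) (haint : ∀ k, Integrable (a k) μ)
    (hY : ∀ k, StronglyMeasurable[ℱ k] (Y k)) (hYint : ∀ k, Integrable (Y k) μ)
    (hl : IsControlLimits μ ℱ N a Y l)
    (hξ : ∀ k ω, ξ (k + 1) ω - ξ k ω = Y k ω - a k ω) (hξint : ∀ k, Integrable (ξ k) μ)
    (hξT : Integrable (fun ω => ξ (firstCrossing N l Y ω) ω) μ)
    (hne : ∀ ω, {k | 1 ≤ k ∧ k ≤ N + 1 ∧ l k ω ≤ Y k ω}.Nonempty) {k : ℕ} (hk : k ≤ N) :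
    μ[{ω | k < firstCrossing N l Y ω}.indicator
        (fun ω => ξ (firstCrossing N l Y ω) ω - ξ k ω) | ℱ k] =ᵐ[μ]
      {ω | k < firstCrossing N l Y ω}.indicator (fun ω => Y k ω - l k ω) := by
  set T := firstCrossing N l Y
  have hA : ∀ k ≤ N, MeasurableSet[ℱ k] {ω | k < T ω} := fun k hk =>
    measurableSet_lt_firstCrossing hne hY (fun j hj => hl.stronglyMeasurable ha hj) hk
  have hsplit : ∀ k, {ω | k < T ω}.indicator (fun ω => ξ (T ω) ω - ξ k ω) =
      {ω | k < T ω}.indicator (fun ω => Y k ω - a k ω) +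
        {ω | k + 1 < T ω}.indicator (fun ω => ξ (T ω) ω - ξ (k + 1) ω) := by
    intro k
    simpa only [hξ] using indicator_lt_sub_eq_add ξ T k
  have hhead : ∀ k ≤ N, μ[{ω | k < T ω}.indicator (fun ω => Y k ω - a k ω) | ℱ k] =
      {ω | k < T ω}.indicator (fun ω => Y k ω - a k ω) := fun k hk =>
    condExp_of_stronglyMeasurable (ℱ.le k) (((hY k).sub (ha k)).indicator (hA k hk))
      (((hYint k).sub (haint k)).indicator (ℱ.le k _ (hA k hk)))
  induction hk using Nat.decreasingInduction with
  | self =>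
    have hT : ∀ ω, ¬ N + 1 < T ω := fun ω => not_lt.2 (firstCrossing_spec (hne ω)).2.1
    simp only [hsplit, hT, Set.ofPred_false, Set.indicator_empty', add_zero, hhead N le_rfl,
      hl.last]
    rfl
  | of_succ k hk ih =>
    set g := fun ω => max (l (k + 1) ω - Y (k + 1) ω) 0
    have hnext : {ω | k + 1 < T ω}.indicator (fun ω => Y (k + 1) ω - l (k + 1) ω) =
        -{ω | k < T ω}.indicator g :=
      indicator_succ_lt_sub_eq_neg _ _ T k
        (fun ω h => (lt_of_lt_firstCrossing (by omega) (by omega) h).le)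
        (fun ω h => h ▸ (firstCrossing_spec (hne ω)).2.2)
    have hgint : Integrable g μ := ((hl.integrable haint hk).sub (hYint _)).pos_part
    have htail : μ[{ω | k + 1 < T ω}.indicator (fun ω => ξ (T ω) ω - ξ (k + 1) ω) | ℱ k]
        =ᵐ[μ] -{ω | k < T ω}.indicator (μ[g | ℱ k]) :=
      calc _ =ᵐ[μ] μ[μ[{ω | k + 1 < T ω}.indicator (fun ω => ξ (T ω) ω - ξ (k + 1) ω)
              | ℱ (k + 1)] | ℱ k] :=
            (condExp_condExp_of_le (ℱ.mono k.le_succ) (ℱ.le _)).symm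
        _ =ᵐ[μ] μ[-{ω | k < T ω}.indicator g | ℱ k] := condExp_congr_ae (hnext ▸ ih)
        _ =ᵐ[μ] -μ[{ω | k < T ω}.indicator g | ℱ k] := condExp_neg _ _
        _ =ᵐ[μ] -{ω | k < T ω}.indicator (μ[g | ℱ k]) :=
            (condExp_indicator hgint (hA k hk.le)).neg
    have hint_head : Integrable ({ω | k < T ω}.indicator fun ω => Y k ω - a k ω) μ :=
      ((hYint k).sub (haint k)).indicator (ℱ.le k _ (hA k hk.le))
    have hint_tail :
        Integrable ({ω | k + 1 < T ω}.indicator fun ω => ξ (T ω) ω - ξ (k + 1) ω) μ :=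
      (hξT.sub (hξint (k + 1))).indicator (ℱ.le _ _ (hA (k + 1) hk))
    rw [hsplit]
    filter_upwards [condExp_add hint_head hint_tail (ℱ k), htail] with ω hadd htail
    rw [hadd, Pi.add_apply, hhead k hk.le, htail, hl.succ k hk]
    simp only [Set.indicator, Pi.neg_apply, Pi.add_apply]
    split_ifs <;> ring

theorem condExp_sub_firstCrossing_ae_eq
    (ha : ∀ k, StronglyMeasurable[ℱ k] (a k)) (haint : ∀ k, Integrable (a k) μ)
    (hY : ∀ k, StronglyMeasurable[ℱ k] (Y k)) (hYint : ∀ k, Integrable (Y k) μ)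
    (hl : IsControlLimits μ ℱ N a Y l)
    (hξ : ∀ k ω, ξ (k + 1) ω - ξ k ω = Y k ω - a k ω) (hξint : ∀ k, Integrable (ξ k) μ)
    (hξT : Integrable (fun ω => ξ (firstCrossing N l Y ω) ω) μ)
    (hne : ∀ ω, {k | 1 ≤ k ∧ k ≤ N + 1 ∧ l k ω ≤ Y k ω}.Nonempty) {k : ℕ} (hk : k ≤ N) :
    ∀ᵐ ω ∂μ, k < firstCrossing N l Y ω →
      μ[fun ω => ξ (firstCrossing N l Y ω) ω - ξ k ω | ℱ k] ω = Y k ω - l k ω := by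
  have hA := measurableSet_lt_firstCrossing hne hY (fun j hj => hl.stronglyMeasurable ha hj) hk
  have hint : Integrable (fun ω => ξ (firstCrossing N l Y ω) ω - ξ k ω) μ := hξT.sub (hξint k)
  filter_upwards [condExp_indicator hint hA,
    condExp_indicator_lt_firstCrossing ha haint hY hYint hl hξ hξint hξT hne hk] with ω hpull hind hω
  simpa only [Set.indicator_of_mem (show ω ∈ {ω | k < firstCrossing N l Y ω} from hω)] using
    hpull.symm.trans hind

end OptimalStopping

end

theorem stmt_8_general {Ω : Type*} {m0 : MeasurableSpace Ω} (μ : Measure Ω) [IsFiniteMeasure μ]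
    (N : ℕ) (ℱ : MeasureTheory.Filtration ℕ m0)
    (c : ℝ)
    (v Y : ℕ → Ω → ℝ)
    (hvmeas : ∀ k, Measurable[ℱ k] (v (k + 1)))
    (hvint : ∀ k, Integrable (v k) μ)
    (hYmeas : ∀ k, Measurable[ℱ k] (Y k)) (hYint : ∀ k, Integrable (Y k) μ)
    (l : ℕ → Ω → ℝ)
    (hlN : l N = fun ω => c * v (N + 1) ω)
    (hlrec : ∀ k < N, l k = fun ω =>
      c * v (k + 1) ω + (μ[fun ω' => max (l (k + 1) ω' - Y (k + 1) ω') 0 | ℱ k]) ω)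
    (ξ : ℕ → Ω → ℝ)
    (hξ : ∀ n, ξ n = fun ω => ∑ k ∈ Finset.Icc 1 n, (Y (k - 1) ω - c * v k ω))
    (Tstar : Ω → ℕ)
    (hTstar : ∀ ω, Tstar ω = sInf {k | 1 ≤ k ∧ k ≤ N + 1 ∧ l k ω ≤ Y k ω})
    (hTne : ∀ ω, {k | 1 ≤ k ∧ k ≤ N + 1 ∧ l k ω ≤ Y k ω}.Nonempty)
    (hξTint : Integrable (fun ω => ξ (Tstar ω) ω) μ) :
    ∀ n, 1 ≤ n → n ≤ N →
      ∀ᵐ ω ∂μ, n < Tstar ω →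
        ((μ[fun ω' => ξ (Tstar ω') ω' - ξ n ω' | ℱ n]) ω = Y n ω - l n ω ∧
          Y n ω - l n ω < 0) := by
  obtain rfl : Tstar = firstCrossing N l Y := funext hTstar
  have hl : IsControlLimits μ ℱ N (fun k ω => c * v (k + 1) ω) Y l :=
    ⟨hlN, fun k hk => hlrec k hk⟩
  have hstep : ∀ k ω, ξ (k + 1) ω - ξ k ω = Y k ω - c * v (k + 1) ω := fun k ω => by
    simp only [hξ, Finset.sum_Icc_succ_top (Nat.le_add_left 1 k), Nat.add_sub_cancel]
    ring
  have hξint : ∀ k, Integrable (ξ k) μ := fun k =>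
    hξ k ▸ integrable_finsetSum _ fun i _ => (hYint _).sub ((hvint i).const_mul c)
  intro n hn hnN
  filter_upwards [condExp_sub_firstCrossing_ae_eq
    (fun k => ((hvmeas k).const_mul c).stronglyMeasurable) (fun k => (hvint _).const_mul c)
    (fun k => (hYmeas k).stronglyMeasurable) hYint hl hstep hξint hξTint hTne hnN] with ω h hω
  exact ⟨h hω, sub_neg.2 (lt_of_lt_firstCrossing hn (by omega) hω)⟩

/-- With `ξ_n = ∑_{k=1}^n (Y_{k−1} − c v_k)` and
`T* = min{1 ≤ k ≤ N+1 : Y_k ≥ l_k(c)}` (where `Y_{N+1} := Y_N`, `l_{N+1}(c) = 0`),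
for every `1 ≤ n ≤ N`, on `{T* > n}` one has
`ME(ξ_{T*} − ξ_n | ℱ_n) = Y_n − l_n(c) < 0` μ-a.e. -/
theorem stmt_8 {Ω : Type*} {m0 : MeasurableSpace Ω} (μ : Measure Ω) [IsFiniteMeasure μ]
    (N : ℕ) (ℱ : MeasureTheory.Filtration ℕ m0)
    (c : ℝ) (hc : 0 < c)
    (v Y : ℕ → Ω → ℝ)
    (hv0 : ∀ k ω, 0 ≤ v k ω) (hvmeas : ∀ k, Measurable[ℱ k] (v (k + 1)))
    (hvint : ∀ k, Integrable (v k) μ)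
    (hY0 : Y 0 = 0) (hYpos : ∀ k ω, 0 ≤ Y k ω)
    (hYmeas : ∀ k, Measurable[ℱ k] (Y k)) (hYint : ∀ k, Integrable (Y k) μ)
    (hYN1 : Y (N + 1) = Y N)
    (l : ℕ → Ω → ℝ)
    (hlN1 : l (N + 1) = 0)
    (hlN : l N = fun ω => c * v (N + 1) ω)
    (hlrec : ∀ k < N, l k = fun ω =>
      c * v (k + 1) ω + (μ[fun ω' => max (l (k + 1) ω' - Y (k + 1) ω') 0 | ℱ k]) ω)
    (ξ : ℕ → Ω → ℝ)
    (hξ : ∀ n, ξ n = fun ω => ∑ k ∈ Finset.Icc 1 n, (Y (k - 1) ω - c * v k ω))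
    (Tstar : Ω → ℕ)
    (hTstar : ∀ ω, Tstar ω = sInf {k | 1 ≤ k ∧ k ≤ N + 1 ∧ l k ω ≤ Y k ω})
    (hTne : ∀ ω, {k | 1 ≤ k ∧ k ≤ N + 1 ∧ l k ω ≤ Y k ω}.Nonempty)
    (hξTint : Integrable (fun ω => ξ (Tstar ω) ω) μ) :
    ∀ n, 1 ≤ n → n ≤ N →
      ∀ᵐ ω ∂μ, n < Tstar ω →
        ((μ[fun ω' => ξ (Tstar ω') ω' - ξ n ω' | ℱ n]) ω = Y n ω - l n ω ∧
          Y n ω - l n ω < 0) :=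
  stmt_8_general μ N ℱ c v Y hvmeas hvint hYmeas hYint l hlN hlrec ξ hξ Tstar hTstar hTne hξTint
end

section
/- With notation as above, for any stopping time T ∈ 𝔗_N (i.e., 1 ≤ T ≤ N+1 and {T ≤ n} ∈ 𝔉_n), on the event {T* = n, T > n} one has ME(ξ_T − ξ_n | 𝔉_n) ≥ Y_n − l_n(c) ≥ 0 μ-a.e., for every 1 ≤ n ≤ N. -/
open MeasureTheory Finset

/-!
Write `G_m = 𝟙_{T > m} (ξ_T - ξ_m)` for the gain of continuing from `m` up to `T`. On `{T > m}`,
`G_m = (ξ_{m+1} - ξ_m) + G_{m+1}`, and `ξ_{m+1} - ξ_m = Y_m - c v_{m+1}` is `ℱ_m`-measurable.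
Backward induction from `m = N` gives `𝟙_{T > m} (Y_m - l_m) ≤ ME(G_m | ℱ_m)`: the induction
hypothesis bounds `ME(G_{m+1} | ℱ_{m+1})` from below by `-(l_{m+1} - Y_{m+1})⁺`, and the tower
property turns this into exactly the conditional expectation occurring in the recursion for `l_m`.
On `{T* = n}` the defining property of `T*` gives `Y_n ≥ l_n`.
-/

section GainAfter

variable {Ω : Type*} {m0 : MeasurableSpace Ω}

theorem condExp_le_condExp_of_le_condExp {μ : Measure Ω} [IsFiniteMeasure μ]
    {m m' : MeasurableSpace Ω} (hmm' : m ≤ m') (hm' : m' ≤ m0) {f g : Ω → ℝ}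
    (hf : Integrable f μ) (hfg : f ≤ᵐ[μ] μ[g | m']) : μ[f | m] ≤ᵐ[μ] μ[g | m] :=
  (condExp_mono hf integrable_condExp hfg).trans (condExp_condExp_of_le hmm' hm').le

theorem measurableSet_lt_of_measurableSet_le {ℱ : Filtration ℕ m0} {T : Ω → ℕ}
    (hT : ∀ n, MeasurableSet[ℱ n] {ω | T ω ≤ n}) (m : ℕ) : MeasurableSet[ℱ m] {ω | m < T ω} := by
  simpa only [Set.compl_ofPred, not_le] using (hT m).compl

noncomputable def gainAfter (X : ℕ → Ω → ℝ) (T : Ω → ℕ) (m : ℕ) : Ω → ℝ :=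
  {ω | m < T ω}.indicator fun ω => X (T ω) ω - X m ω

theorem gainAfter_eq_indicator_add (X : ℕ → Ω → ℝ) (T : Ω → ℕ) (m : ℕ) :
    gainAfter X T m = {ω | m < T ω}.indicator (X (m + 1) - X m) + gainAfter X T (m + 1) := by
  funext ω
  simp only [gainAfter, Pi.add_apply, Pi.sub_apply, Set.indicator_apply, Set.mem_ofPred_eq]
  split_ifs with h h' h'
  · ring
  · rw [show T ω = m + 1 by omega, add_zero]
  · omega
  · rw [add_zero]

theorem gainAfter_eq_zero_of_le {X : ℕ → Ω → ℝ} {T : Ω → ℕ} {m : ℕ} (hT : ∀ ω, T ω ≤ m) :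
    gainAfter X T m = 0 := by
  funext ω
  simp [gainAfter, (hT ω).not_gt]

theorem indicator_gainAfter_succ (X : ℕ → Ω → ℝ) (T : Ω → ℕ) (m : ℕ) :
    {ω | m < T ω}.indicator (gainAfter X T (m + 1)) = gainAfter X T (m + 1) := by
  have hsub : {ω | m + 1 < T ω} ⊆ {ω | m < T ω} := fun ω (h : m + 1 < T ω) =>
    show m < T ω by omega
  rw [gainAfter, Set.indicator_indicator, Set.inter_eq_right.mpr hsub]

theorem integrable_gainAfter {μ : Measure Ω} {X : ℕ → Ω → ℝ} {T : Ω → ℕ} {m : ℕ}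
    (hXm : Integrable (X m) μ) (hXT : Integrable (fun ω => X (T ω) ω) μ)
    (hm : MeasurableSet {ω | m < T ω}) : Integrable (gainAfter X T m) μ :=
  (hXT.sub hXm).indicator hm

end GainAfter

section BackwardInduction

variable {Ω : Type*} {m0 : MeasurableSpace Ω} {μ : Measure Ω}
  {ℱ : Filtration ℕ m0} {X : ℕ → Ω → ℝ} {T : Ω → ℕ} {N : ℕ} {Z : ℕ → Ω → ℝ}

theorem indicator_sub_condExp_le_condExp_gainAfter [IsFiniteMeasure μ]
    (hX : ∀ k, Integrable (X k) μ) (hd : ∀ k, StronglyMeasurable[ℱ k] (X (k + 1) - X k))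
    (hXT : Integrable (fun ω => X (T ω) ω) μ) (hT : ∀ n, MeasurableSet[ℱ n] {ω | T ω ≤ n})
    (m : ℕ) {W : Ω → ℝ} (hW : Integrable W μ)
    (ih : {ω | m + 1 < T ω}.indicator W ≤ᵐ[μ] μ[gainAfter X T (m + 1) | ℱ (m + 1)]) :
    {ω | m < T ω}.indicator (X (m + 1) - X m - μ[fun ω => max (-W ω) 0 | ℱ m])
      ≤ᵐ[μ] μ[gainAfter X T m | ℱ m] := by
  set A := {ω | m < T ω}
  set q : Ω → ℝ := fun ω => max (-W ω) 0
  have hA : MeasurableSet[ℱ m] A := measurableSet_lt_of_measurableSet_le hT m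
  have hd_int : Integrable (A.indicator (X (m + 1) - X m)) μ :=
    ((hX _).sub (hX _)).indicator (ℱ.le m _ hA)
  have hG_int : Integrable (gainAfter X T (m + 1)) μ :=
    integrable_gainAfter (hX _) hXT (ℱ.le _ _ (measurableSet_lt_of_measurableSet_le hT (m + 1)))
  have hsplit : μ[gainAfter X T m | ℱ m]
      =ᵐ[μ] A.indicator (X (m + 1) - X m) + μ[gainAfter X T (m + 1) | ℱ m] := by
    rw [gainAfter_eq_indicator_add]
    refine (condExp_add hd_int hG_int (ℱ m)).trans ?_
    rw [condExp_of_stronglyMeasurable (ℱ.le m) ((hd m).indicator hA) hd_int]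
  have hsupport : μ[gainAfter X T (m + 1) | ℱ m]
      =ᵐ[μ] A.indicator (μ[gainAfter X T (m + 1) | ℱ m]) := by
    simpa only [A, indicator_gainAfter_succ] using condExp_indicator hG_int hA
  have hneg_q : -q ≤ {ω | m + 1 < T ω}.indicator W := fun ω => by
    by_cases h : ω ∈ {ω | m + 1 < T ω}
    · simp only [Set.indicator_of_mem h, Pi.neg_apply, q, neg_le, le_max_left]
    · simp only [Set.indicator_of_notMem h, Pi.neg_apply, q, neg_nonpos, le_max_right]
  have hlower : μ[-q | ℱ m] ≤ᵐ[μ] μ[gainAfter X T (m + 1) | ℱ m] :=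
    condExp_le_condExp_of_le_condExp (ℱ.mono m.le_succ) (ℱ.le _) hW.neg.pos_part.neg
      (Filter.EventuallyLE.trans (ae_of_all μ hneg_q) ih)
  filter_upwards [hsplit, hsupport, hlower, condExp_neg q (ℱ m)]
    with ω h_split h_supp h_low h_neg
  rw [h_split, Pi.add_apply]
  by_cases hω : ω ∈ A
  · simp only [Set.indicator_of_mem hω, Pi.sub_apply] at h_neg h_low ⊢
    rw [h_neg, Pi.neg_apply] at h_low
    linarith
  · simp only [Set.indicator_of_notMem hω] at h_supp ⊢
    rw [h_supp, zero_add]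

theorem integrable_of_backward_recursion (hX : ∀ k, Integrable (X k) μ)
    (hZN : Z N = X (N + 1) - X N)
    (hZ : ∀ k < N, Z k = X (k + 1) - X k - μ[fun ω => max (-Z (k + 1) ω) 0 | ℱ k])
    {m : ℕ} (hm : m ≤ N) : Integrable (Z m) μ := by
  induction hm using Nat.decreasingInduction with
  | self => exact hZN ▸ (hX _).sub (hX _)
  | of_succ k hk _ => exact hZ k hk ▸ ((hX _).sub (hX _)).sub integrable_condExp

theorem indicator_le_condExp_gainAfter [IsFiniteMeasure μ] (hX : ∀ k, Integrable (X k) μ)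
    (hd : ∀ k, StronglyMeasurable[ℱ k] (X (k + 1) - X k))
    (hXT : Integrable (fun ω => X (T ω) ω) μ) (hT : ∀ n, MeasurableSet[ℱ n] {ω | T ω ≤ n})
    (hTN : ∀ ω, T ω ≤ N + 1) (hZN : Z N = X (N + 1) - X N)
    (hZ : ∀ k < N, Z k = X (k + 1) - X k - μ[fun ω => max (-Z (k + 1) ω) 0 | ℱ k])
    {m : ℕ} (hm : m ≤ N) :
    {ω | m < T ω}.indicator (Z m) ≤ᵐ[μ] μ[gainAfter X T m | ℱ m] := by
  induction hm using Nat.decreasingInduction with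
  | self =>
    -- the step lemma with `W = 0`, since `G_{N+1} = 0`
    have h := indicator_sub_condExp_le_condExp_gainAfter hX hd hXT hT N
      (integrable_zero Ω ℝ μ) (by simp [gainAfter_eq_zero_of_le hTN, Filter.EventuallyLE.rfl])
    simpa [hZN, ← Pi.zero_def] using h
  | of_succ k hk ih =>
    rw [hZ k hk]
    exact indicator_sub_condExp_le_condExp_gainAfter hX hd hXT hT k
      (integrable_of_backward_recursion hX hZN hZ hk) ih

end BackwardInduction

theorem stmt_9_general {Ω : Type*} {m0 : MeasurableSpace Ω} (μ : Measure Ω) [IsFiniteMeasure μ]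
    (N : ℕ) (ℱ : MeasureTheory.Filtration ℕ m0)
    (c : ℝ)
    (v Y : ℕ → Ω → ℝ)
    (hvmeas : ∀ k, Measurable[ℱ k] (v (k + 1)))
    (hvint : ∀ k, Integrable (v k) μ)
    (hYmeas : ∀ k, Measurable[ℱ k] (Y k)) (hYint : ∀ k, Integrable (Y k) μ)
    (l : ℕ → Ω → ℝ)
    (hlN : l N = fun ω => c * v (N + 1) ω)
    (hlrec : ∀ k < N, l k = fun ω =>
      c * v (k + 1) ω + (μ[fun ω' => max (l (k + 1) ω' - Y (k + 1) ω') 0 | ℱ k]) ω)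
    (ξ : ℕ → Ω → ℝ)
    (hξ : ∀ n, ξ n = fun ω => ∑ k ∈ Finset.Icc 1 n, (Y (k - 1) ω - c * v k ω))
    (Tstar : Ω → ℕ)
    (hTstar : ∀ ω, Tstar ω = sInf {k | 1 ≤ k ∧ k ≤ N + 1 ∧ l k ω ≤ Y k ω})
    (hTne : ∀ ω, {k | 1 ≤ k ∧ k ≤ N + 1 ∧ l k ω ≤ Y k ω}.Nonempty)
    (T : Ω → ℕ) (hT2 : ∀ ω, T ω ≤ N + 1)
    (hTstop : ∀ n, MeasurableSet[ℱ n] {ω | T ω ≤ n})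
    (hξTint : Integrable (fun ω => ξ (T ω) ω) μ) :
    ∀ n, 1 ≤ n → n ≤ N →
      ∀ᵐ ω ∂μ, (Tstar ω = n ∧ n < T ω) →
        (Y n ω - l n ω ≤ (μ[fun ω' => ξ (T ω') ω' - ξ n ω' | ℱ n]) ω ∧
          0 ≤ Y n ω - l n ω) := by
  have hinc : ∀ k, ξ (k + 1) - ξ k = fun ω => Y k ω - c * v (k + 1) ω := fun k => by
    funext ω
    simp [hξ, Finset.sum_Icc_succ_top (Nat.le_add_left 1 k)]
  have hξint : ∀ k, Integrable (ξ k) μ := fun k => hξ k ▸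
    integrable_finsetSum _ fun i _ => (hYint (i - 1)).sub ((hvint i).const_mul c)
  have hd : ∀ k, StronglyMeasurable[ℱ k] (ξ (k + 1) - ξ k) := fun k => hinc k ▸
    ((hYmeas k).sub (measurable_const.mul (hvmeas k))).stronglyMeasurable
  have hZN : Y N - l N = ξ (N + 1) - ξ N := by
    rw [hinc, hlN]
    rfl
  have hZ : ∀ k < N, Y k - l k =
      ξ (k + 1) - ξ k - μ[fun ω => max (-(Y (k + 1) - l (k + 1)) ω) 0 | ℱ k] := fun k hk => by
    funext ω
    simp only [hinc, hlrec k hk, Pi.sub_apply, neg_sub]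
    ring
  intro n _ hnN
  filter_upwards [indicator_le_condExp_gainAfter (Z := fun k => Y k - l k) hξint hd hξTint
      hTstop hT2 hZN hZ hnN,
    condExp_indicator (f := fun ω => ξ (T ω) ω - ξ n ω) (hξTint.sub (hξint n))
      (measurableSet_lt_of_measurableSet_le hTstop n)]
    with ω hkey hind
  rintro ⟨hTstar_eq, hnT⟩
  have hω : ω ∈ {ω | n < T ω} := hnT
  rw [gainAfter, hind, Set.indicator_of_mem hω, Set.indicator_of_mem hω] at hkey
  have hstop := (Nat.sInf_mem (hTne ω)).2.2
  rw [← hTstar, hTstar_eq] at hstop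
  exact ⟨hkey, sub_nonneg.mpr hstop⟩

/-- With `ξ_n = ∑_{k=1}^n (Y_{k−1} − c v_k)` and `T* = min{1 ≤ k ≤ N+1 : Y_k ≥ l_k(c)}`,
for any stopping time `T ∈ 𝔗_N`, on `{T* = n, T > n}` one has
`ME(ξ_T − ξ_n | ℱ_n) ≥ Y_n − l_n(c) ≥ 0` μ-a.e., for every `1 ≤ n ≤ N`. -/
theorem stmt_9 {Ω : Type*} {m0 : MeasurableSpace Ω} (μ : Measure Ω) [IsFiniteMeasure μ]
    (N : ℕ) (ℱ : MeasureTheory.Filtration ℕ m0)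
    (c : ℝ) (hc : 0 < c)
    (v Y : ℕ → Ω → ℝ)
    (hv0 : ∀ k ω, 0 ≤ v k ω) (hvmeas : ∀ k, Measurable[ℱ k] (v (k + 1)))
    (hvint : ∀ k, Integrable (v k) μ)
    (hY0 : Y 0 = 0) (hYpos : ∀ k ω, 0 ≤ Y k ω)
    (hYmeas : ∀ k, Measurable[ℱ k] (Y k)) (hYint : ∀ k, Integrable (Y k) μ)
    (hYN1 : Y (N + 1) = Y N)
    (l : ℕ → Ω → ℝ)
    (hlN1 : l (N + 1) = 0)
    (hlN : l N = fun ω => c * v (N + 1) ω)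
    (hlrec : ∀ k < N, l k = fun ω =>
      c * v (k + 1) ω + (μ[fun ω' => max (l (k + 1) ω' - Y (k + 1) ω') 0 | ℱ k]) ω)
    (ξ : ℕ → Ω → ℝ)
    (hξ : ∀ n, ξ n = fun ω => ∑ k ∈ Finset.Icc 1 n, (Y (k - 1) ω - c * v k ω))
    (Tstar : Ω → ℕ)
    (hTstar : ∀ ω, Tstar ω = sInf {k | 1 ≤ k ∧ k ≤ N + 1 ∧ l k ω ≤ Y k ω})
    (hTne : ∀ ω, {k | 1 ≤ k ∧ k ≤ N + 1 ∧ l k ω ≤ Y k ω}.Nonempty)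
    (T : Ω → ℕ) (hT1 : ∀ ω, 1 ≤ T ω) (hT2 : ∀ ω, T ω ≤ N + 1)
    (hTstop : ∀ n, MeasurableSet[ℱ n] {ω | T ω ≤ n})
    (hξTint : Integrable (fun ω => ξ (T ω) ω) μ) :
    ∀ n, 1 ≤ n → n ≤ N →
      ∀ᵐ ω ∂μ, (Tstar ω = n ∧ n < T ω) →
        (Y n ω - l n ω ≤ (μ[fun ω' => ξ (T ω') ω' - ξ n ω' | ℱ n]) ω ∧
          0 ≤ Y n ω - l n ω) :=
  stmt_9_general μ N ℱ c v Y hvmeas hvint hYmeas hYint l hlN hlrec ξ hξ Tstar hTstar hTne T hT2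
    hTstop hξTint
end

section
/- The optimal stopping value at time 0 satisfies ∫ ξ_{T*(c)} dμ = −∫ l_0(c) dμ, i.e., the minimal value of ∫ ξ_T dμ over all stopping times T ∈ 𝔗_N equals minus the μ-expectation of the time-0 control limit l_0(c). -/
open MeasureTheory Finset

/-!
Write `S k = {k < T*}`. Pathwise, `ξ_{T*} = ∑_{k=0}^{N} 1_{S k} (Y_k - c v_{k+1})`. Since
`S k ∈ 𝔉_k`, the defining property of the conditional expectation in the recursion for `l_k`
turns `∫_{S k} (Y_k - l_k)` into `∫_{S k} (Y_k - c v_{k+1}) - ∫_{S k} [l_{k+1} - Y_{k+1}]⁺`,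
and on `S k` the positive part lives exactly on `S (k+1)`, so the last integral is
`-∫_{S (k+1)} (Y_{k+1} - l_{k+1})`. Telescoping from `k = 0` (where `S 0 = Ω` and `Y_0 = 0`)
to `k = N` (where `l_N = c v_{N+1}`) gives the identity.
-/

theorem sum_Icc_one_eq_sum_range {M : Type*} [AddCommMonoid M] (f : ℕ → M) (n : ℕ) :
    ∑ k ∈ Icc 1 n, f k = ∑ j ∈ range n, f (j + 1) := by
  rw [← Finset.Ico_add_one_right_eq_Icc, ← zero_add 1, ← sum_Ico_add', range_eq_Ico]

theorem sum_Icc_one_eq_sum_range_ite {M : Type*} [AddCommMonoid M] (f : ℕ → M)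
    {n m : ℕ} (hnm : n ≤ m) :
    ∑ k ∈ Icc 1 n, f k = ∑ j ∈ range m, if j < n then f (j + 1) else 0 := by
  rw [sum_Icc_one_eq_sum_range, ← sum_filter]
  congr 1
  ext j
  simp only [mem_range, mem_filter]
  omega

theorem integral_sum_Icc_one_eq_sum_setIntegral {Ω : Type*} {m0 : MeasurableSpace Ω}
    {μ : Measure Ω} {N : ℕ} {T : Ω → ℕ} (hTle : ∀ ω, T ω ≤ N + 1) {f : ℕ → Ω → ℝ}
    (hf : ∀ j ≤ N, Integrable (f (j + 1)) μ) (hS : ∀ j ≤ N, MeasurableSet {ω | j < T ω}) :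
    ∫ ω, ∑ k ∈ Icc 1 (T ω), f k ω ∂μ =
      ∑ j ∈ range (N + 1), ∫ ω in {ω | j < T ω}, f (j + 1) ω ∂μ := by
  have hind : ∀ ω, ∑ k ∈ Icc 1 (T ω), f k ω =
      ∑ j ∈ range (N + 1), {ω | j < T ω}.indicator (f (j + 1)) ω := fun ω => by
    simp only [sum_Icc_one_eq_sum_range_ite (f · ω) (hTle ω), Set.indicator_apply,
      Set.mem_ofPred_eq]
  have hjN : ∀ j ∈ range (N + 1), j ≤ N := fun j hj => Nat.lt_succ_iff.mp (mem_range.mp hj)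
  simp only [hind]
  rw [integral_finsetSum _ fun j hj => (hf j (hjN j hj)).indicator (hS j (hjN j hj))]
  exact sum_congr rfl fun j hj => integral_indicator (hS j (hjN j hj))

theorem eq_sum_range_add_of_eq_add_succ {G : Type*} [AddCommGroup G] {A a : ℕ → G} {N : ℕ}
    (h : ∀ k < N, A k = a k + A (k + 1)) : A 0 = ∑ k ∈ range N, a k + A N := by
  rw [← sub_eq_iff_eq_add, ← sum_range_sub']
  exact sum_congr rfl fun k hk => by rw [h k (mem_range.mp hk), add_sub_cancel_right]

section FirstIndex

variable {P : ℕ → Prop} {M : ℕ}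

theorem one_le_sInf_of_nonempty (hne : {j | 1 ≤ j ∧ j ≤ M ∧ P j}.Nonempty) :
    1 ≤ sInf {j | 1 ≤ j ∧ j ≤ M ∧ P j} :=
  (Nat.sInf_mem hne).1

theorem sInf_le_of_nonempty (hne : {j | 1 ≤ j ∧ j ≤ M ∧ P j}.Nonempty) :
    sInf {j | 1 ≤ j ∧ j ≤ M ∧ P j} ≤ M :=
  (Nat.sInf_mem hne).2.1

theorem succ_lt_sInf_iff (hne : {j | 1 ≤ j ∧ j ≤ M ∧ P j}.Nonempty) (k : ℕ) :
    k + 1 < sInf {j | 1 ≤ j ∧ j ≤ M ∧ P j} ↔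
      k < sInf {j | 1 ≤ j ∧ j ≤ M ∧ P j} ∧ ¬ P (k + 1) := by
  obtain ⟨-, hle, hP⟩ := Nat.sInf_mem hne
  constructor
  · intro hlt
    refine ⟨by omega, fun hPk => ?_⟩
    have := Nat.sInf_le (s := {j | 1 ≤ j ∧ j ≤ M ∧ P j}) ⟨by omega, by omega, hPk⟩
    omega
  · rintro ⟨hlt, hPk⟩
    refine lt_of_le_of_ne hlt fun heq => hPk ?_
    rwa [heq]

end FirstIndex

theorem max_zero_eq_indicator {α : Type*} (g : α → ℝ) (x : α) :
    max (g x) 0 = {x | 0 < g x}.indicator g x := by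
  by_cases h : 0 < g x
  · simp [h, h.le]
  · simp [h, not_lt.mp h]

theorem setIntegral_sub_condExp_max_zero {Ω : Type*} {m m0 : MeasurableSpace Ω}
    {μ : Measure Ω} (hm : m ≤ m0) [SigmaFinite (μ.trim hm)] {f g : Ω → ℝ} {S : Set Ω}
    (hS : MeasurableSet[m] S) (hf : Integrable f μ) (hg : Integrable g μ)
    (hgpos : MeasurableSet {x | 0 < g x}) :
    ∫ x in S, (f x - μ[fun x => max (g x) 0 | m] x) ∂μ =
      ∫ x in S, f x ∂μ - ∫ x in S ∩ {x | 0 < g x}, g x ∂μ := by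
  rw [integral_sub hf.integrableOn integrable_condExp.integrableOn,
    setIntegral_condExp hm hg.pos_part hS, ← setIntegral_indicator hgpos]
  simp only [max_zero_eq_indicator g]

section ControlLimits

variable {Ω : Type*} {m0 : MeasurableSpace Ω} {μ : Measure Ω} {ℱ : Filtration ℕ m0} {N : ℕ}
  {c : ℝ} {v Y l : ℕ → Ω → ℝ}

theorem measurable_controlLimit (hvmeas : ∀ k, Measurable[ℱ k] (v (k + 1)))
    (hlN : l N = fun ω => c * v (N + 1) ω)
    (hlrec : ∀ k < N, l k = fun ω =>
      c * v (k + 1) ω + (μ[fun ω' => max (l (k + 1) ω' - Y (k + 1) ω') 0 | ℱ k]) ω)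
    {j : ℕ} (hj : j ≤ N) : Measurable[ℱ j] (l j) := by
  rcases hj.eq_or_lt with rfl | hj
  · rw [hlN]
    exact (hvmeas j).const_mul c
  · rw [hlrec j hj]
    exact ((hvmeas j).const_mul c).add stronglyMeasurable_condExp.measurable

theorem integrable_controlLimit (hvint : ∀ k, Integrable (v k) μ)
    (hlN : l N = fun ω => c * v (N + 1) ω)
    (hlrec : ∀ k < N, l k = fun ω =>
      c * v (k + 1) ω + (μ[fun ω' => max (l (k + 1) ω' - Y (k + 1) ω') 0 | ℱ k]) ω)
    {j : ℕ} (hj : j ≤ N) : Integrable (l j) μ := by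
  rcases hj.eq_or_lt with rfl | hj
  · rw [hlN]
    exact (hvint (j + 1)).const_mul c
  · rw [hlrec j hj]
    exact ((hvint (j + 1)).const_mul c).add integrable_condExp

variable {T : Ω → ℕ}

theorem measurableSet_lt_of_succ_lt_iff (hT0 : ∀ ω, 0 < T ω)
    (hTsucc : ∀ k ω, k + 1 < T ω ↔ k < T ω ∧ Y (k + 1) ω < l (k + 1) ω)
    (hYmeas : ∀ k, Measurable[ℱ k] (Y k)) (hlmeas : ∀ j ≤ N, Measurable[ℱ j] (l j)) :
    ∀ k ≤ N, MeasurableSet[ℱ k] {ω | k < T ω}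
  | 0, _ => by simp [hT0]
  | k + 1, hk => by
    simp only [hTsucc, Set.ofPred_and]
    exact (ℱ.mono k.le_succ _ (measurableSet_lt_of_succ_lt_iff hT0 hTsucc hYmeas hlmeas k
      (by omega))).inter (measurableSet_lt (hYmeas (k + 1)) (hlmeas (k + 1) hk))

theorem setIntegral_sub_controlLimit [IsFiniteMeasure μ] {k : ℕ}
    (hlrec : l k = fun ω =>
      c * v (k + 1) ω + (μ[fun ω' => max (l (k + 1) ω' - Y (k + 1) ω') 0 | ℱ k]) ω)
    (hTsucc : ∀ ω, k + 1 < T ω ↔ k < T ω ∧ Y (k + 1) ω < l (k + 1) ω)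
    (hS : MeasurableSet[ℱ k] {ω | k < T ω}) (hYk : Integrable (Y k) μ)
    (hv : Integrable (v (k + 1)) μ) (hY : Integrable (Y (k + 1)) μ)
    (hl : Integrable (l (k + 1)) μ) (hlt : MeasurableSet {ω | Y (k + 1) ω < l (k + 1) ω}) :
    ∫ ω in {ω | k < T ω}, (Y k ω - l k ω) ∂μ =
      ∫ ω in {ω | k < T ω}, (Y k ω - c * v (k + 1) ω) ∂μ +
        ∫ ω in {ω | k + 1 < T ω}, (Y (k + 1) ω - l (k + 1) ω) ∂μ := by
  have hset : {ω | k + 1 < T ω} = {ω | k < T ω} ∩ {ω | 0 < l (k + 1) ω - Y (k + 1) ω} := by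
    ext ω
    simp [hTsucc, sub_pos]
  have hpos : MeasurableSet {ω | 0 < l (k + 1) ω - Y (k + 1) ω} := by
    simpa only [sub_pos] using hlt
  calc ∫ ω in {ω | k < T ω}, (Y k ω - l k ω) ∂μ
      = ∫ ω in {ω | k < T ω}, (Y k ω - c * v (k + 1) ω -
          μ[fun ω' => max (l (k + 1) ω' - Y (k + 1) ω') 0 | ℱ k] ω) ∂μ := by
        simp only [hlrec, sub_add_eq_sub_sub]
    _ = ∫ ω in {ω | k < T ω}, (Y k ω - c * v (k + 1) ω) ∂μ -
          ∫ ω in {ω | k + 1 < T ω}, (l (k + 1) ω - Y (k + 1) ω) ∂μ := by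
        rw [hset]
        exact setIntegral_sub_condExp_max_zero (ℱ.le k) hS (hYk.sub (hv.const_mul c))
          (hl.sub hY) hpos
    _ = _ := by
        rw [sub_eq_add_neg, ← integral_neg]
        simp only [neg_sub]

end ControlLimits

theorem stmt_11_general {Ω : Type*} {m0 : MeasurableSpace Ω} (μ : Measure Ω) [IsFiniteMeasure μ]
    (N : ℕ) (ℱ : MeasureTheory.Filtration ℕ m0)
    (c : ℝ)
    (v Y : ℕ → Ω → ℝ)
    (hvmeas : ∀ k, Measurable[ℱ k] (v (k + 1)))
    (hvint : ∀ k, Integrable (v k) μ)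
    (hY0 : Y 0 = 0)
    (hYmeas : ∀ k, Measurable[ℱ k] (Y k)) (hYint : ∀ k, Integrable (Y k) μ)
    (l : ℕ → Ω → ℝ)
    (hlN : l N = fun ω => c * v (N + 1) ω)
    (hlrec : ∀ k < N, l k = fun ω =>
      c * v (k + 1) ω + (μ[fun ω' => max (l (k + 1) ω' - Y (k + 1) ω') 0 | ℱ k]) ω)
    (ξ : ℕ → Ω → ℝ)
    (hξ : ∀ n, ξ n = fun ω => ∑ k ∈ Finset.Icc 1 n, (Y (k - 1) ω - c * v k ω))
    (Tstar : Ω → ℕ)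
    (hTstar : ∀ ω, Tstar ω = sInf {k | 1 ≤ k ∧ k ≤ N + 1 ∧ l k ω ≤ Y k ω})
    (hTne : ∀ ω, {k | 1 ≤ k ∧ k ≤ N + 1 ∧ l k ω ≤ Y k ω}.Nonempty) :
    ∫ ω, ξ (Tstar ω) ω ∂μ = -∫ ω, l 0 ω ∂μ := by
  have hT0 : ∀ ω, 0 < Tstar ω := fun ω => hTstar ω ▸ one_le_sInf_of_nonempty (hTne ω)
  have hTle : ∀ ω, Tstar ω ≤ N + 1 := fun ω => hTstar ω ▸ sInf_le_of_nonempty (hTne ω)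
  have hTsucc : ∀ k ω, k + 1 < Tstar ω ↔ k < Tstar ω ∧ Y (k + 1) ω < l (k + 1) ω :=
    fun k ω => by rw [hTstar, succ_lt_sInf_iff (hTne ω), not_le]
  have hlmeas : ∀ j ≤ N, Measurable[ℱ j] (l j) := fun _ => measurable_controlLimit hvmeas hlN hlrec
  have hlint : ∀ j ≤ N, Integrable (l j) μ := fun _ => integrable_controlLimit hvint hlN hlrec
  have hS := measurableSet_lt_of_succ_lt_iff hT0 hTsucc hYmeas hlmeas
  have hstep : ∀ k < N, ∫ ω in {ω | k < Tstar ω}, (Y k ω - l k ω) ∂μ =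
      ∫ ω in {ω | k < Tstar ω}, (Y k ω - c * v (k + 1) ω) ∂μ +
        ∫ ω in {ω | k + 1 < Tstar ω}, (Y (k + 1) ω - l (k + 1) ω) ∂μ := fun k hk =>
    setIntegral_sub_controlLimit (hlrec k hk) (hTsucc k) (hS k hk.le) (hYint k) (hvint _)
      (hYint _) (hlint (k + 1) hk) (ℱ.le _ _ (measurableSet_lt (hYmeas _) (hlmeas _ hk)))
  simp only [hξ]
  have hint : ∀ j ≤ N, Integrable (fun ω => Y (j + 1 - 1) ω - c * v (j + 1) ω) μ :=
    fun j _ => (hYint j).sub ((hvint (j + 1)).const_mul c)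
  rw [integral_sum_Icc_one_eq_sum_setIntegral hTle hint fun j hj => ℱ.le j _ (hS j hj),
    sum_range_succ]
  have hA0 : ∫ ω in {ω | 0 < Tstar ω}, (Y 0 ω - l 0 ω) ∂μ = -∫ ω, l 0 ω ∂μ := by
    simp [hT0, hY0, integral_neg]
  rw [← hA0, eq_sum_range_add_of_eq_add_succ hstep, hlN]
  simp only [add_tsub_cancel_right]

/-- The optimal stopping value at time 0: `∫ ξ_{T*(c)} dμ = −∫ l_0(c) dμ`, where
`ξ_n = ∑_{k=1}^n (Y_{k−1} − c v_k)` and `T*(c) = min{1 ≤ k ≤ N+1 : Y_k ≥ l_k(c)}`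
with control limits given by the backward recursion under a finite measure `μ`. -/
theorem stmt_11 {Ω : Type*} {m0 : MeasurableSpace Ω} (μ : Measure Ω) [IsFiniteMeasure μ]
    (N : ℕ) (ℱ : MeasureTheory.Filtration ℕ m0)
    (c : ℝ) (hc : 0 < c)
    (v Y : ℕ → Ω → ℝ)
    (hv0 : ∀ k ω, 0 ≤ v k ω) (hvmeas : ∀ k, Measurable[ℱ k] (v (k + 1)))
    (hvint : ∀ k, Integrable (v k) μ)
    (hY0 : Y 0 = 0) (hYpos : ∀ k ω, 0 ≤ Y k ω)
    (hYmeas : ∀ k, Measurable[ℱ k] (Y k)) (hYint : ∀ k, Integrable (Y k) μ)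
    (hYN1 : Y (N + 1) = Y N)
    (l : ℕ → Ω → ℝ)
    (hlN1 : l (N + 1) = 0)
    (hlN : l N = fun ω => c * v (N + 1) ω)
    (hlrec : ∀ k < N, l k = fun ω =>
      c * v (k + 1) ω + (μ[fun ω' => max (l (k + 1) ω' - Y (k + 1) ω') 0 | ℱ k]) ω)
    (ξ : ℕ → Ω → ℝ)
    (hξ : ∀ n, ξ n = fun ω => ∑ k ∈ Finset.Icc 1 n, (Y (k - 1) ω - c * v k ω))
    (Tstar : Ω → ℕ)
    (hTstar : ∀ ω, Tstar ω = sInf {k | 1 ≤ k ∧ k ≤ N + 1 ∧ l k ω ≤ Y k ω})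
    (hTne : ∀ ω, {k | 1 ≤ k ∧ k ≤ N + 1 ∧ l k ω ≤ Y k ω}.Nonempty)
    (hξTstarint : Integrable (fun ω => ξ (Tstar ω) ω) μ)
    (hl0int : Integrable (l 0) μ) :
    ∫ ω, ξ (Tstar ω) ω ∂μ = -∫ ω, l 0 ω ∂μ :=
  stmt_11_general μ N ℱ c v Y hvmeas hvint hY0 hYmeas hYint l hlN hlrec ξ hξ Tstar hTstar hTne
end

section
/- If (Y_k, X_k), 0 ≤ k ≤ N, is a (two-dimensional) Markov process under the finite measure μ (i.e., conditional measure expectations given 𝔉_k of functions of (Y_{k+1}, X_{k+1}) depend only on (Y_k, X_k)), and the weights satisfy w_{k+1} = w_{k+1}(Y_k) and v_{k+1} = v_{k+1}(Y_k), then the recursively defined control limits satisfy l_k(c) = c v_{k+1}(Y_k) + ME([l_{k+1}(c) − (Y_k + w_{k+1}(Y_k))Λ_{k+1}]^+ | Y_k, X_k) μ-a.e., i.e., l_k(c) is a measurable function of (c, Y_k, X_k) only. -/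
/-! Backward induction on `k`. If `l (k + 1)` is a.e. a measurable function of
`(Y (k + 1), X (k + 1))`, then so is `[l (k + 1) - Y (k + 1)]⁺`, and the Markov property lets
one condition on `(Y k, X k)` instead of `ℱ k`. By Doob–Dynkin, that conditional expectation is a
measurable function of `(Y k, X k)`, and so is `c * v (k + 1) (Y k)`, which carries the induction
down to `k`. -/

open MeasureTheory

section ConditionalExpectation

variable {Ω B : Type*} {m m' m0 : MeasurableSpace Ω} [MeasurableSpace B] {μ : Measure Ω}

lemma exists_condExp_comap_eq_measurable_comp (ψ : Ω → B) (F : Ω → ℝ) :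
    ∃ g : B → ℝ, Measurable g ∧ μ[F | MeasurableSpace.comap ψ inferInstance] = g ∘ ψ := by
  obtain ⟨g, hg, hFg⟩ :=
    (stronglyMeasurable_condExp (m := MeasurableSpace.comap ψ inferInstance) (f := F)
      (μ := μ)).exists_eq_measurable_comp
  exact ⟨g, hg.measurable, hFg⟩

lemma exists_ae_eq_measurable_comp_of_ae_eq_add_condExp_comap (ψ : Ω → B) {a : B → ℝ}
    (ha : Measurable a) {F G : Ω → ℝ}
    (hG : G =ᵐ[μ] fun ω => a (ψ ω) + μ[F | MeasurableSpace.comap ψ inferInstance] ω) :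
    ∃ g : B → ℝ, Measurable g ∧ G =ᵐ[μ] fun ω => g (ψ ω) := by
  obtain ⟨g, hg, hFg⟩ := exists_condExp_comap_eq_measurable_comp (μ := μ) ψ F
  refine ⟨fun b => a b + g b, ha.add hg, ?_⟩
  filter_upwards [hG] with ω hω
  rw [hω, hFg, Function.comp_apply]

lemma condExp_ae_eq_of_ae_eq_comp (ψ : Ω → B)
    (hψ : ∀ f : B → ℝ, Measurable f → Integrable (fun ω => f (ψ ω)) μ →
      μ[fun ω => f (ψ ω) | m] =ᵐ[μ] μ[fun ω => f (ψ ω) | m'])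
    {F : Ω → ℝ} {f : B → ℝ} (hf : Measurable f) (hF : F =ᵐ[μ] fun ω => f (ψ ω)) :
    μ[F | m] =ᵐ[μ] μ[F | m'] := by
  refine (condExp_congr_ae hF).trans (.trans ?_ (condExp_congr_ae hF.symm))
  by_cases hint : Integrable (fun ω => f (ψ ω)) μ
  · exact hψ f hf hint
  · rw [condExp_of_not_integrable hint, condExp_of_not_integrable hint]

end ConditionalExpectation

section ControlLimits

variable {Ω E : Type*} {m0 : MeasurableSpace Ω} [MeasurableSpace E] {μ : Measure Ω}

lemma controlLimit_ae_eq_add_condExp_pair {m : MeasurableSpace Ω} {X : ℕ → Ω → E}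
    {Y Λ : ℕ → Ω → ℝ} {w v : ℕ → ℝ → ℝ} {c : ℝ} {l : ℕ → Ω → ℝ} {k : ℕ}
    (hYrec : Y (k + 1) = fun ω => (Y k ω + w (k + 1) (Y k ω)) * Λ (k + 1) ω)
    (hlrec : l k = fun ω =>
      c * v (k + 1) (Y k ω) + (μ[fun ω' => max (l (k + 1) ω' - Y (k + 1) ω') 0 | m]) ω)
    (hMarkov : ∀ f : ℝ × E → ℝ, Measurable f →
      Integrable (fun ω => f (Y (k + 1) ω, X (k + 1) ω)) μ →
      μ[fun ω => f (Y (k + 1) ω, X (k + 1) ω) | m] =ᵐ[μ]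
        μ[fun ω => f (Y (k + 1) ω, X (k + 1) ω) |
          MeasurableSpace.comap (fun ω => (Y k ω, X k ω)) inferInstance])
    (hfactor : ∃ g : ℝ × E → ℝ, Measurable g ∧
      l (k + 1) =ᵐ[μ] fun ω => g (Y (k + 1) ω, X (k + 1) ω)) :
    l k =ᵐ[μ] fun ω =>
      c * v (k + 1) (Y k ω) +
        (μ[fun ω' => max (l (k + 1) ω' - (Y k ω' + w (k + 1) (Y k ω')) * Λ (k + 1) ω') 0 |
          MeasurableSpace.comap (fun ω => (Y k ω, X k ω)) inferInstance]) ω := by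
  obtain ⟨g, hg, hlg⟩ := hfactor
  have hcond := condExp_ae_eq_of_ae_eq_comp (fun ω => (Y (k + 1) ω, X (k + 1) ω)) hMarkov
    (F := fun ω => max (l (k + 1) ω - Y (k + 1) ω) 0) (f := fun p => max (g p - p.1) 0)
    ((hg.sub measurable_fst).max measurable_const) (hlg.mono fun ω hω => by simp only [hω])
  rw [hlrec]
  filter_upwards [hcond] with ω hω
  rw [hω, hYrec]

end ControlLimits

theorem stmt_14_general {Ω E : Type*} {m0 : MeasurableSpace Ω} [MeasurableSpace E]
    (μ : Measure Ω)
    (N : ℕ) (ℱ : MeasureTheory.Filtration ℕ m0)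
    (X : ℕ → Ω → E)
    (Y Λ : ℕ → Ω → ℝ) (w v : ℕ → ℝ → ℝ) (c : ℝ)
    (hv : ∀ k, Measurable (v k))
    (hYrec : ∀ k, Y (k + 1) = fun ω => (Y k ω + w (k + 1) (Y k ω)) * Λ (k + 1) ω)
    (l : ℕ → Ω → ℝ)
    (hlN : l N = fun ω => c * v (N + 1) (Y N ω))
    (hlrec : ∀ k < N, l k = fun ω =>
      c * v (k + 1) (Y k ω) +
        (μ[fun ω' => max (l (k + 1) ω' - Y (k + 1) ω') 0 | ℱ k]) ω)
    (hMarkov : ∀ k ≤ N, ∀ f : ℝ × E → ℝ, Measurable f →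
      Integrable (fun ω => f (Y (k + 1) ω, X (k + 1) ω)) μ →
      μ[fun ω => f (Y (k + 1) ω, X (k + 1) ω) | ℱ k] =ᵐ[μ]
        μ[fun ω => f (Y (k + 1) ω, X (k + 1) ω) |
          MeasurableSpace.comap (fun ω => (Y k ω, X k ω)) inferInstance]) :
    (∀ k < N, l k =ᵐ[μ] fun ω =>
        c * v (k + 1) (Y k ω) +
          (μ[fun ω' => max (l (k + 1) ω' - (Y k ω' + w (k + 1) (Y k ω')) * Λ (k + 1) ω') 0 |
            MeasurableSpace.comap (fun ω => (Y k ω, X k ω)) inferInstance]) ω) ∧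
      (∀ k ≤ N, ∃ g : ℝ × E → ℝ, Measurable g ∧
        l k =ᵐ[μ] fun ω => g (Y k ω, X k ω)) := by
  have step := fun k (hk : k < N) =>
    controlLimit_ae_eq_add_condExp_pair (hYrec k) (hlrec k hk) (hMarkov k hk.le)
  have factor : ∀ k ≤ N, ∃ g : ℝ × E → ℝ, Measurable g ∧
      l k =ᵐ[μ] fun ω => g (Y k ω, X k ω) := by
    intro k hk
    induction hk using Nat.decreasingInduction with
    | self => exact ⟨fun p => c * v (N + 1) p.1,
        measurable_const.mul ((hv (N + 1)).comp measurable_fst), by rw [hlN]⟩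
    | of_succ k hk ih =>
      exact exists_ae_eq_measurable_comp_of_ae_eq_add_condExp_comap _
        (measurable_const.mul ((hv (k + 1)).comp measurable_fst)) (step k hk ih)
  exact ⟨fun k hk => step k hk (factor (k + 1) hk), factor⟩

/-- If `(Y_k, X_k)` is a Markov pair process under the finite measure `μ` and the
weights are functions of `Y_k` only, then the recursively defined control limits
satisfy `l_k(c) = c v_{k+1}(Y_k) + ME([l_{k+1}(c) − (Y_k + w_{k+1}(Y_k))Λ_{k+1}]⁺ | Y_k, X_k)`
μ-a.e., and `l_k(c)` is a measurable function of `(Y_k, X_k)` only. -/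
theorem stmt_14 {Ω E : Type*} {m0 : MeasurableSpace Ω} [MeasurableSpace E]
    (μ : Measure Ω) [IsFiniteMeasure μ]
    (N : ℕ) (ℱ : MeasureTheory.Filtration ℕ m0)
    (X : ℕ → Ω → E) (hX : ∀ k, Measurable[ℱ k] (X k))
    (Y Λ : ℕ → Ω → ℝ) (w v : ℕ → ℝ → ℝ) (c : ℝ)
    (hw : ∀ k, Measurable (w k)) (hv : ∀ k, Measurable (v k))
    (hYrec : ∀ k, Y (k + 1) = fun ω => (Y k ω + w (k + 1) (Y k ω)) * Λ (k + 1) ω)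
    (hYmeas : ∀ k, Measurable[ℱ k] (Y k))
    (hΛmeas : ∀ k, Measurable[ℱ k] (Λ k))
    (l : ℕ → Ω → ℝ)
    (hlN1 : l (N + 1) = 0)
    (hlN : l N = fun ω => c * v (N + 1) (Y N ω))
    (hlrec : ∀ k < N, l k = fun ω =>
      c * v (k + 1) (Y k ω) +
        (μ[fun ω' => max (l (k + 1) ω' - Y (k + 1) ω') 0 | ℱ k]) ω)
    (hMarkov : ∀ k ≤ N, ∀ f : ℝ × E → ℝ, Measurable f →
      Integrable (fun ω => f (Y (k + 1) ω, X (k + 1) ω)) μ →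
      μ[fun ω => f (Y (k + 1) ω, X (k + 1) ω) | ℱ k] =ᵐ[μ]
        μ[fun ω => f (Y (k + 1) ω, X (k + 1) ω) |
          MeasurableSpace.comap (fun ω => (Y k ω, X k ω)) inferInstance]) :
    (∀ k < N, l k =ᵐ[μ] fun ω =>
        c * v (k + 1) (Y k ω) +
          (μ[fun ω' => max (l (k + 1) ω' - (Y k ω' + w (k + 1) (Y k ω')) * Λ (k + 1) ω') 0 |
            MeasurableSpace.comap (fun ω => (Y k ω, X k ω)) inferInstance]) ω) ∧
      (∀ k ≤ N, ∃ g : ℝ × E → ℝ, Measurable g ∧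
        l k =ᵐ[μ] fun ω => g (Y k ω, X k ω)) :=
  stmt_14_general μ N ℱ X Y Λ w v c hv hYrec l hlN hlrec hMarkov
end
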